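/- Let d ≥ 1, let Σ be a positive definite d×d real matrix, let θ₀ ∈ ℝ^d and σ ≥ 0. Define R_L(θ,ε) := ‖θ−θ₀‖²_Σ + σ² + ε²‖θ‖₂² + 2ε√(2/π)·‖θ‖₂·√(‖θ−θ₀‖²_Σ + σ²). Then there exists a constant c > 0 (depending only on θ₀, Σ, σ) such that for every ε ≥ c, the point θ = 0 is a global minimizer of R_L(·,ε): R_L(0,ε) ≤ R_L(θ,ε) for all θ ∈ ℝ^d. -/

import Mathlib

open MeasureTheory ProbabilityTheory Real Filter Matrix
open scoped RealInnerProductSpace BigOperators NNReal ENNReal Topology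

noncomputable section

/-- The Σ-quadratic form `aᵀ Σ a`. -/
def quadForm {d : ℕ} (S : Matrix (Fin d) (Fin d) ℝ) (a : EuclideanSpace ℝ (Fin d)) : ℝ :=
  ∑ i, ∑ j, a i * S i j * a j

/-- The population adversarial risk of the linear model `f_θ(x) = θᵀx` under squared loss
and `L2` attacks of strength `ε`, for `x ~ N(0,Σ)` and `y = θ₀ᵀx + w`, `w ~ N(0,σ²)`:
`R_L(θ,ε) = ‖θ−θ₀‖²_Σ + σ² + ε²‖θ‖₂² + 2ε√(2/π)‖θ‖₂√(‖θ−θ₀‖²_Σ + σ²)`. -/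
def RL {d : ℕ} (S : Matrix (Fin d) (Fin d) ℝ) (θ0 : EuclideanSpace ℝ (Fin d))
    (σ ε : ℝ) (θ : EuclideanSpace ℝ (Fin d)) : ℝ :=
  quadForm S (θ - θ0) + σ ^ 2 + ε ^ 2 * ‖θ‖ ^ 2 +
    2 * ε * Real.sqrt (2 / Real.pi) * ‖θ‖ * Real.sqrt (quadForm S (θ - θ0) + σ ^ 2)

/-!
Factor `Σ = Bᵀ B`, so that `‖v‖²_Σ = ‖L v‖²` for the operator `L` of `B`. The triangle inequality
gives `‖L θ₀‖ ≤ ‖L (θ - θ₀)‖ + ‖L‖ ‖θ‖`; squaring it, `R_L(0, ε) - R_L(θ, ε)` is at most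
`(‖L‖² - ε²) ‖θ‖² + 2 ‖θ‖ (‖L‖ ‖L (θ - θ₀)‖ - ε √(2/π) √(‖θ - θ₀‖²_Σ + σ²))`, which is `≤ 0`
as soon as `ε √(2/π) ≥ ‖L‖` (hence also `ε ≥ ‖L‖`).
-/

open scoped MatrixOrder

lemma quadForm_eq_dotProduct {d : ℕ} (S : Matrix (Fin d) (Fin d) ℝ)
    (a : EuclideanSpace ℝ (Fin d)) : quadForm S a = a ⬝ᵥ S *ᵥ a := by
  simp only [quadForm, dotProduct, mulVec, Finset.mul_sum]
  exact Finset.sum_congr rfl fun i _ => Finset.sum_congr rfl fun j _ => by ring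

lemma Matrix.PosSemidef.exists_quadForm_eq_norm_sq {d : ℕ} {S : Matrix (Fin d) (Fin d) ℝ}
    (hS : S.PosSemidef) :
    ∃ L : EuclideanSpace ℝ (Fin d) →L[ℝ] EuclideanSpace ℝ (Fin d),
      ∀ a, quadForm S a = ‖L a‖ ^ 2 := by
  obtain ⟨B, rfl⟩ := CStarAlgebra.nonneg_iff_eq_star_mul_self.mp hS.nonneg
  refine ⟨toEuclideanCLM (𝕜 := ℝ) B, fun a => ?_⟩
  rw [quadForm_eq_dotProduct, ← real_inner_self_eq_norm_sq, ← inner_toEuclideanCLM, map_mul,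
    mul_apply_eq_comp, map_star, ContinuousLinearMap.star_eq_adjoint,
    ContinuousLinearMap.adjoint_inner_right]

lemma RL_zero_le_of_opNorm_le {d : ℕ} {S : Matrix (Fin d) (Fin d) ℝ}
    {L : EuclideanSpace ℝ (Fin d) →L[ℝ] EuclideanSpace ℝ (Fin d)}
    (hL : ∀ a, quadForm S a = ‖L a‖ ^ 2) (θ0 : EuclideanSpace ℝ (Fin d)) (σ : ℝ) {ε : ℝ}
    (hLε : ‖L‖ ≤ ε) (hLεπ : ‖L‖ ≤ ε * √(2 / π)) (θ : EuclideanSpace ℝ (Fin d)) :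
    RL S θ0 σ ε 0 ≤ RL S θ0 σ ε θ := by
  set n := ‖L (θ - θ0)‖
  have htri : ‖L θ0‖ ≤ n + ‖L‖ * ‖θ‖ := calc
    ‖L θ0‖ = ‖L (θ - θ0) - L θ‖ := by rw [← map_sub, sub_sub_cancel_left, map_neg, norm_neg]
    _ ≤ n + ‖L θ‖ := norm_sub_le _ _
    _ ≤ n + ‖L‖ * ‖θ‖ := by gcongr; exact L.le_opNorm θ
  have hn : n ≤ √(n ^ 2 + σ ^ 2) := le_sqrt_of_sq_le (by nlinarith)
  simp only [RL, hL, zero_sub, map_neg, norm_neg, norm_zero]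
  calc _ = ‖L θ0‖ ^ 2 + σ ^ 2 := by ring
    _ ≤ (n + ‖L‖ * ‖θ‖) ^ 2 + σ ^ 2 := by gcongr
    _ = n ^ 2 + σ ^ 2 + ‖L‖ ^ 2 * ‖θ‖ ^ 2 + 2 * ‖L‖ * ‖θ‖ * n := by ring
    _ ≤ n ^ 2 + σ ^ 2 + ε ^ 2 * ‖θ‖ ^ 2 + 2 * (ε * √(2 / π)) * ‖θ‖ * √(n ^ 2 + σ ^ 2) := by
        have : 0 ≤ ε * √(2 / π) := (norm_nonneg L).trans hLεπ
        gcongr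
    _ = _ := by ring

theorem adversarial_risk_zero_is_minimizer_for_large_eps
    {d : ℕ} (S : Matrix (Fin d) (Fin d) ℝ) (hS : S.PosDef)
    (θ0 : EuclideanSpace ℝ (Fin d)) (σ : ℝ) :
    ∃ c : ℝ, 0 < c ∧ ∀ ε : ℝ, c ≤ ε → ∀ θ : EuclideanSpace ℝ (Fin d),
      RL S θ0 σ ε 0 ≤ RL S θ0 σ ε θ := by
  obtain ⟨L, hL⟩ := hS.posSemidef.exists_quadForm_eq_norm_sq
  have hπ : 0 < √(2 / π) := by positivity
  have hπ1 : √(2 / π) ≤ 1 := sqrt_le_one.mpr ((div_le_one pi_pos).mpr two_le_pi)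
  refine ⟨(‖L‖ + 1) / √(2 / π), by positivity, fun ε hε θ => ?_⟩
  have hLεπ : ‖L‖ ≤ ε * √(2 / π) := by
    have := (div_le_iff₀ hπ).mp hε
    linarith
  have hε0 : 0 ≤ ε := (div_nonneg (by positivity) hπ.le).trans hε
  exact RL_zero_le_of_opNorm_le hL θ0 σ (hLεπ.trans (mul_le_of_le_one_right hε0 hπ1)) hLεπ θ

end
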